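/- arXiv:1501.07679 — 9 statements merged into one kernel-verified Lean document; each statement's English description precedes it below -/
import Mathlib

section
/- For all a, b ∈ G one has S* · ρ(T a) · (T b)* · ρ(S) = δ_{a,−b} · ε_a(−a) · (1/d) · 1 in A. -/
theorem cuntz_SstarRhoT_TstarRhoS
    {G : Type*} [AddCommGroup G] [Fintype G] [DecidableEq G]
    {A : Type*} [Ring A] [Algebra ℂ A] [StarRing A] [StarModule ℂ A]
    (d : ℝ) (hd : 0 < d)
    (S : A) (T : G → A) (ρ : A →⋆ₐ[ℂ] A)
    (ε : G → G → ℝ) (Acoef : G → G → G → ℂ)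
    (hε : ∀ g h : G, ε g h = 1 ∨ ε g h = -1)
    (hAc : ∀ g h k : G, (starRingEnd ℂ) (Acoef g h k) = Acoef g k h)
    (hSS : star S * S = 1)
    (hTisom : ∀ g : G, star (T g) * T g = 1)
    (hST : ∀ g : G, star S * T g = 0)
    (hTorth : ∀ g h : G, g ≠ h → star (T g) * T h = 0)
    (hρS : ρ S = ((d : ℂ))⁻¹ • S + ((Real.sqrt d : ℂ))⁻¹ • ∑ g : G, T g * T g)
    (hρT : ∀ g : G, ρ (T g) = ((ε g (-g) : ℂ)) •
        (T (-g) * S * star S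
          + ((Real.sqrt d : ℂ))⁻¹ • (S * star (T (-g)))
          + ∑ h : G, ∑ k : G,
              Acoef (-g) h k • (T (h - g) * T (h + k - g) * star (T (k - g)))))
    (a b : G) :
    star S * ρ (T a) * star (T b) * ρ S
      = (if a = -b then (ε a (-a) : ℂ) / (d : ℂ) else 0) • (1 : A) := by
  have hTS : ∀ g : G, star (T g) * S = 0 := by
    intro g
    have := congrArg star (hST g)
    simpa [star_mul] using this
  have hST' : ∀ (g : G) (x : A), star S * (T g * x) = 0 := fun g x => by
    rw [← mul_assoc, hST, zero_mul]
  have hSS' : ∀ x : A, star S * (S * x) = x := fun x => by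
    rw [← mul_assoc, hSS, one_mul]
  have hTS' : ∀ (g : G) (x : A), star (T g) * (S * x) = 0 := fun g x => by
    rw [← mul_assoc, hTS, zero_mul]
  have hTT' : ∀ (g h : G) (x : A), star (T g) * (T h * x) = if g = h then x else 0 := by
    intro g h x
    by_cases hgh : g = h
    · rw [← mul_assoc, hgh, hTisom, one_mul, if_pos rfl]
    · rw [← mul_assoc, hTorth g h hgh, zero_mul, if_neg hgh]
  have hsq : ((Real.sqrt d : ℂ))⁻¹ * ((Real.sqrt d : ℂ))⁻¹ = ((d : ℂ))⁻¹ := by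
    rw [← mul_inv]
    norm_cast
    rw [Real.mul_self_sqrt hd.le]
  rw [hρT a, hρS]
  simp only [smul_mul_assoc, mul_smul_comm, mul_add, add_mul, Finset.mul_sum,
    Finset.sum_mul, smul_add, mul_assoc, hST', hSS', hTS', hTT', smul_zero,
    Finset.sum_const_zero, add_zero, zero_add, mul_zero, zero_mul, smul_ite]
  have hTT : ∀ g h : G, star (T g) * T h = if g = h then 1 else 0 := by
    intro g h
    by_cases hgh : g = h
    · rw [hgh, hTisom, if_pos rfl]
    · rw [hTorth g h hgh, if_neg hgh]
  simp only [hTS, mul_zero, smul_zero, zero_add, mul_ite, hTT, smul_ite,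
    Finset.sum_ite_eq, Finset.mem_univ, if_true, smul_smul]
  by_cases hab : a = -b
  · have : -a = b := by rw [hab]; simp
    simp only [this, hab, if_pos rfl, div_eq_mul_inv]
    rw [mul_left_comm, hsq]
    simp
  · have : ¬(-a = b) := fun h => hab (by rw [← h]; simp)
    simp [this, hab]
end

section
/- For all a, b ∈ G one has S* · ρ(T a · (T b)*) · S · S* · ρ(S) = δ_{a,b} · ε_a(−a) · ε_b(−b) · (1/d²) · 1, and moreover S* · ρ(S·S*) · S · S* · ρ(S) = (1/d³) · 1 in A. -/
theorem cuntz_SstarRhoTTstar_and_SstarRhoSSstar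
    {G : Type*} [AddCommGroup G] [Fintype G] [DecidableEq G]
    {A : Type*} [Ring A] [Algebra ℂ A] [StarRing A] [StarModule ℂ A]
    (d : ℝ) (hd : 0 < d)
    (S : A) (T : G → A) (ρ : A →⋆ₐ[ℂ] A)
    (ε : G → G → ℝ) (Acoef : G → G → G → ℂ)
    (hε : ∀ g h : G, ε g h = 1 ∨ ε g h = -1)
    (hAc : ∀ g h k : G, (starRingEnd ℂ) (Acoef g h k) = Acoef g k h)
    (hSS : star S * S = 1)
    (hTisom : ∀ g : G, star (T g) * T g = 1)
    (hST : ∀ g : G, star S * T g = 0)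
    (hTorth : ∀ g h : G, g ≠ h → star (T g) * T h = 0)
    (hρS : ρ S = ((d : ℂ))⁻¹ • S + ((Real.sqrt d : ℂ))⁻¹ • ∑ g : G, T g * T g)
    (hρT : ∀ g : G, ρ (T g) = ((ε g (-g) : ℂ)) •
        (T (-g) * S * star S
          + ((Real.sqrt d : ℂ))⁻¹ • (S * star (T (-g)))
          + ∑ h : G, ∑ k : G,
              Acoef (-g) h k • (T (h - g) * T (h + k - g) * star (T (k - g)))))
    (a b : G) :
    star S * ρ (T a * star (T b)) * S * star S * ρ S
        = (if a = b then (ε a (-a) : ℂ) * (ε b (-b) : ℂ) / (d : ℂ) ^ 2 else 0) • (1 : A)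
      ∧ star S * ρ (S * star S) * S * star S * ρ S = ((d : ℂ) ^ 3)⁻¹ • (1 : A) := by

  have hST' : ∀ (g : G) (x : A), star S * (T g * x) = 0 := fun g x => by
    rw [← mul_assoc, hST, zero_mul]
  have hSS' : ∀ x : A, star S * (S * x) = x := fun x => by
    rw [← mul_assoc, hSS, one_mul]
  have hsqrt : ((Real.sqrt d : ℂ))⁻¹ * ((Real.sqrt d : ℂ))⁻¹ = (d : ℂ)⁻¹ := by
    rw [← mul_inv]
    norm_cast
    rw [Real.mul_self_sqrt hd.le]
  have key1 : ∀ c : G, star S * ρ (T c)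
      = ((ε c (-c) : ℂ) * ((Real.sqrt d : ℂ))⁻¹) • star (T (-c)) := by
    intro c
    rw [hρT c]
    simp [mul_add, Finset.mul_sum, mul_smul_comm, smul_smul, mul_assoc, hST', hSS']
  have key2 : ∀ c : G, star (ρ (T c)) * S
      = ((ε c (-c) : ℂ) * ((Real.sqrt d : ℂ))⁻¹) • T (-c) := by
    intro c
    have := congrArg star (key1 c)
    simpa [star_mul, star_star, star_smul, map_mul, map_inv₀, Complex.conj_ofReal,
      mul_comm] using this
  have key3 : star S * ρ S = (d : ℂ)⁻¹ • (1 : A) := by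
    rw [hρS]
    simp [mul_add, Finset.mul_sum, mul_smul_comm, hST', hSS]
  have key4 : star (ρ S) * S = (d : ℂ)⁻¹ • (1 : A) := by
    have := congrArg star key3
    simpa [star_mul, star_star, star_smul, map_inv₀, Complex.conj_ofReal] using this
  constructor
  · rw [map_mul, map_star]
    rw [show star S * (ρ (T a) * star (ρ (T b))) * S * star S * ρ S
        = (star S * ρ (T a)) * ((star (ρ (T b)) * S) * (star S * ρ S)) from by
      noncomm_ring]
    rw [key1 a, key2 b, key3]
    by_cases hab : a = b
    · subst hab
      simp [smul_smul, smul_mul_assoc, mul_smul_comm, hTisom, hsqrt]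
      ring_nf
      congr 1
      rw [pow_two ((Real.sqrt d : ℂ))⁻¹, hsqrt]
      ring
    · have : (-a : G) ≠ -b := fun h => hab (neg_injective h)
      simp [smul_smul, smul_mul_assoc, mul_smul_comm, hTorth _ _ this, hab]
  · rw [map_mul, map_star]
    rw [show star S * (ρ S * star (ρ S)) * S * star S * ρ S
        = (star S * ρ S) * ((star (ρ S) * S) * (star S * ρ S)) from by noncomm_ring]
    rw [key3, key4]
    simp [smul_smul, smul_mul_assoc, mul_smul_comm]
    ring_nf
end

section
/- For all a, b ∈ G one has S* · ρ(S·S*) · (T a) · (T b)* · ρ(S) = δ_{a,b} · (1/d²) · 1 in A. -/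
theorem cuntz_SstarRhoSSstar_TTstar_rhoS
    {G : Type*} [AddCommGroup G] [Fintype G] [DecidableEq G]
    {A : Type*} [Ring A] [Algebra ℂ A] [StarRing A] [StarModule ℂ A]
    (d : ℝ) (hd : 0 < d)
    (S : A) (T : G → A) (ρ : A →⋆ₐ[ℂ] A)
    (ε : G → G → ℝ) (Acoef : G → G → G → ℂ)
    (hε : ∀ g h : G, ε g h = 1 ∨ ε g h = -1)
    (hAc : ∀ g h k : G, (starRingEnd ℂ) (Acoef g h k) = Acoef g k h)
    (hSS : star S * S = 1)
    (hTisom : ∀ g : G, star (T g) * T g = 1)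
    (hST : ∀ g : G, star S * T g = 0)
    (hTorth : ∀ g h : G, g ≠ h → star (T g) * T h = 0)
    (hρS : ρ S = ((d : ℂ))⁻¹ • S + ((Real.sqrt d : ℂ))⁻¹ • ∑ g : G, T g * T g)
    (hρT : ∀ g : G, ρ (T g) = ((ε g (-g) : ℂ)) •
        (T (-g) * S * star S
          + ((Real.sqrt d : ℂ))⁻¹ • (S * star (T (-g)))
          + ∑ h : G, ∑ k : G,
              Acoef (-g) h k • (T (h - g) * T (h + k - g) * star (T (k - g)))))
    (a b : G) :
    star S * ρ (S * star S) * T a * star (T b) * ρ S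
      = (if a = b then ((d : ℂ) ^ 2)⁻¹ else 0) • (1 : A) := by

  have hTT : ∀ g h : G, star (T g) * T h = if g = h then 1 else 0 := by
    intro g h
    by_cases hgh : g = h
    · subst hgh; simp [hTisom]
    · simp [hgh, hTorth g h hgh]
  have hTbS : star (T b) * S = 0 := by
    have := congrArg star (hST b); simpa [star_mul] using this
  have h1 : star S * ρ S = ((d : ℂ))⁻¹ • (1 : A) := by
    rw [hρS]
    simp [mul_add, Finset.mul_sum, mul_smul_comm, ← mul_assoc, hSS, hST]
  have hsum : ∑ g : G, star (T g) * star (T g) * T a = star (T a) := by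
    rw [Finset.sum_eq_single a]
    · rw [mul_assoc, hTT, if_pos rfl, mul_one]
    · intro g _ hg; rw [mul_assoc, hTT, if_neg hg, mul_zero]
    · intro h; exact absurd (Finset.mem_univ a) h
  have h2 : ρ (star S) * T a = ((Real.sqrt d : ℂ))⁻¹ • star (T a) := by
    rw [map_star, hρS]
    simp only [star_add, star_smul, star_inv₀, Complex.star_def,
      Complex.conj_ofReal, star_sum, star_mul, add_mul, smul_mul_assoc,
      Finset.sum_mul, hST a, smul_zero, zero_add, hsum]
  have hsum2 : ∑ g : G, star (T b) * (T g * T g) = T b := by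
    rw [Finset.sum_eq_single b]
    · rw [← mul_assoc, hTT, if_pos rfl, one_mul]
    · intro g _ hg; rw [← mul_assoc, hTT, if_neg (Ne.symm hg), zero_mul]
    · intro h; exact absurd (Finset.mem_univ b) h
  have h3 : star (T b) * ρ S = ((Real.sqrt d : ℂ))⁻¹ • T b := by
    rw [hρS]
    simp only [mul_add, mul_smul_comm, Finset.mul_sum, hsum2]
    rw [hTbS, smul_zero, zero_add]
  have hassoc : star S * ρ (S * star S) * T a * star (T b) * ρ S
      = (star S * ρ S) * ((ρ (star S) * T a) * (star (T b) * ρ S)) := by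
    rw [map_mul]; simp only [mul_assoc]
  rw [hassoc, h1, h2, h3]
  have hsq : ((Real.sqrt d : ℂ))⁻¹ * ((Real.sqrt d : ℂ))⁻¹ = ((d : ℂ))⁻¹ := by
    rw [← mul_inv]
    norm_cast
    rw [Real.mul_self_sqrt hd.le]
  rw [smul_mul_smul_comm, hTT a b]
  by_cases hab : a = b
  · simp only [hab, if_pos rfl, if_true]
    rw [smul_mul_smul_comm, one_mul, hsq, ← mul_inv, ← sq]
  · simp [hab]
end

section
/- For all a, b ∈ G one has (T a)* · ρ(S·S*) · S · S* · ρ(T b) = ε_b(−b) · (1/d²) · (T a) · (T(−b))* in A. -/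
theorem cuntz_TstarRhoSSstar_SSstar_rhoT
    {G : Type*} [AddCommGroup G] [Fintype G] [DecidableEq G]
    {A : Type*} [Ring A] [Algebra ℂ A] [StarRing A] [StarModule ℂ A]
    (d : ℝ) (hd : 0 < d)
    (S : A) (T : G → A) (ρ : A →⋆ₐ[ℂ] A)
    (ε : G → G → ℝ) (Acoef : G → G → G → ℂ)
    (hε : ∀ g h : G, ε g h = 1 ∨ ε g h = -1)
    (hAc : ∀ g h k : G, (starRingEnd ℂ) (Acoef g h k) = Acoef g k h)
    (hSS : star S * S = 1)
    (hTisom : ∀ g : G, star (T g) * T g = 1)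
    (hST : ∀ g : G, star S * T g = 0)
    (hTorth : ∀ g h : G, g ≠ h → star (T g) * T h = 0)
    (hρS : ρ S = ((d : ℂ))⁻¹ • S + ((Real.sqrt d : ℂ))⁻¹ • ∑ g : G, T g * T g)
    (hρT : ∀ g : G, ρ (T g) = ((ε g (-g) : ℂ)) •
        (T (-g) * S * star S
          + ((Real.sqrt d : ℂ))⁻¹ • (S * star (T (-g)))
          + ∑ h : G, ∑ k : G,
              Acoef (-g) h k • (T (h - g) * T (h + k - g) * star (T (k - g)))))
    (a b : G) :
    star (T a) * ρ (S * star S) * S * star S * ρ (T b)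
      = ((ε b (-b) : ℂ) / (d : ℂ) ^ 2) • (T a * star (T (-b))) := by
  have hTS : ∀ g : G, star (T g) * S = 0 := fun g => by
    have := congrArg star (hST g)
    simpa [star_mul] using this
  set s : ℂ := ((Real.sqrt d : ℝ) : ℂ) with hs
  have hss : s * s = (d : ℂ) := by
    rw [hs, ← Complex.ofReal_mul, Real.mul_self_sqrt hd.le]
  have h1 : star (T a) * ρ S = s⁻¹ • T a := by
    rw [hρS]
    rw [mul_add, mul_smul_comm, mul_smul_comm, Finset.mul_sum]
    have : ∀ g : G, star (T a) * (T g * T g) = if g = a then T a else 0 := by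
      intro g
      by_cases h : g = a
      · subst h; rw [← mul_assoc, hTisom, one_mul, if_pos rfl]
      · rw [← mul_assoc, hTorth a g (Ne.symm h), zero_mul, if_neg h]
    simp only [this]
    rw [Finset.sum_ite_eq' Finset.univ a (fun _ => T a), if_pos (Finset.mem_univ a)]
    simp [mul_smul_comm, hTS]
  have h2 : star (ρ S) * S = ((d : ℂ))⁻¹ • (1 : A) := by
    rw [hρS]
    rw [star_add, star_smul, star_smul, add_mul, smul_mul_assoc, smul_mul_assoc, hSS]
    have : star (∑ g : G, T g * T g) * S = 0 := by
      rw [star_sum, Finset.sum_mul]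
      refine Finset.sum_eq_zero fun g _ => ?_
      rw [star_mul, mul_assoc, hTS, mul_zero]
    rw [this, smul_zero, add_zero]
    simp [Complex.conj_ofReal]
  have h3 : star S * ρ (T b) = ((ε b (-b) : ℂ) * s⁻¹) • star (T (-b)) := by
    rw [hρT b]
    rw [mul_smul_comm, mul_add, mul_add, mul_smul_comm, Finset.mul_sum]
    rw [← mul_assoc, ← mul_assoc, hST, zero_mul, zero_mul]
    rw [← mul_assoc, hSS, one_mul]
    have : ∀ h : G, star S * ∑ k : G, Acoef (-b) h k • (T (h - b) * T (h + k - b) * star (T (k - b))) = 0 := by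
      intro h
      rw [Finset.mul_sum]
      refine Finset.sum_eq_zero fun k _ => ?_
      simp [mul_smul_comm, ← mul_assoc, hST]
    simp only [this]
    simp [mul_smul]
  have key : star (T a) * ρ (S * star S) * S * star S * ρ (T b)
      = (star (T a) * ρ S) * ((star (ρ S) * S) * (star S * ρ (T b))) := by
    rw [map_mul, map_star]
    simp only [mul_assoc]
  rw [key, h1, h2, h3]
  rw [smul_mul_smul_comm, smul_mul_smul_comm, one_mul]
  congr 1
  have hdne : (d : ℂ) ≠ 0 := by exact_mod_cast hd.ne'
  have hsne : s ≠ 0 := fun h => hdne (by rw [← hss, h, mul_zero])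
  have hinv : s⁻¹ * s⁻¹ = ((d : ℂ))⁻¹ := by rw [← mul_inv, hss]
  have hd1 : ((d : ℂ))⁻¹ * (d : ℂ) = 1 := inv_mul_cancel₀ hdne
  rw [eq_div_iff (pow_ne_zero 2 hdne)]
  linear_combination ((d : ℂ))⁻¹ * ((ε b (-b) : ℂ)) * (d : ℂ) ^ 2 * hinv
    + ((ε b (-b) : ℂ)) * (((d : ℂ))⁻¹ * (d : ℂ) + 1) * hd1
end

section
/- For all a, b, c, e ∈ G one has (T a)* · ρ(S·S*) · (T b) · (T c)* · ρ(T e) = ε_e(−e) · (1/d) · A_{−e}(c+e, b−c) · (T a) · (T(b−c−e))* in A. -/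
theorem cuntz_TstarRhoSSstar_TTstar_rhoT
    {G : Type*} [AddCommGroup G] [Fintype G] [DecidableEq G]
    {A : Type*} [Ring A] [Algebra ℂ A] [StarRing A] [StarModule ℂ A]
    (d : ℝ) (hd : 0 < d)
    (S : A) (T : G → A) (ρ : A →⋆ₐ[ℂ] A)
    (ε : G → G → ℝ) (Acoef : G → G → G → ℂ)
    (hε : ∀ g h : G, ε g h = 1 ∨ ε g h = -1)
    (hAc : ∀ g h k : G, (starRingEnd ℂ) (Acoef g h k) = Acoef g k h)
    (hSS : star S * S = 1)
    (hTisom : ∀ g : G, star (T g) * T g = 1)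
    (hST : ∀ g : G, star S * T g = 0)
    (hTorth : ∀ g h : G, g ≠ h → star (T g) * T h = 0)
    (hρS : ρ S = ((d : ℂ))⁻¹ • S + ((Real.sqrt d : ℂ))⁻¹ • ∑ g : G, T g * T g)
    (hρT : ∀ g : G, ρ (T g) = ((ε g (-g) : ℂ)) •
        (T (-g) * S * star S
          + ((Real.sqrt d : ℂ))⁻¹ • (S * star (T (-g)))
          + ∑ h : G, ∑ k : G,
              Acoef (-g) h k • (T (h - g) * T (h + k - g) * star (T (k - g)))))
    (a b c e : G) :
    star (T a) * ρ (S * star S) * T b * star (T c) * ρ (T e)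
      = ((ε e (-e) : ℂ) / (d : ℂ) * Acoef (-e) (c + e) (b - c)) •
          (T a * star (T (b - c - e))) := by
  have hTS : ∀ g : G, star (T g) * S = 0 := by
    intro g
    have := congrArg star (hST g)
    simpa [star_mul] using this
  have keyE : ∀ (g : G) (x : A), star (T g) * (T g * x) = x := by
    intro g x; rw [← mul_assoc, hTisom g, one_mul]
  have keyN : ∀ (g h : G) (x : A), g ≠ h → star (T g) * (T h * x) = 0 := by
    intro g h x hgh; rw [← mul_assoc, hTorth g h hgh, zero_mul]
  have hsd : ((Real.sqrt d : ℂ))⁻¹ * ((Real.sqrt d : ℂ))⁻¹ = ((d : ℂ))⁻¹ := by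
    rw [← mul_inv]
    norm_cast
    rw [Real.mul_self_sqrt hd.le]
  -- Step 1 : star (T g) * ρ S
  have h1 : ∀ g : G, star (T g) * ρ S = ((Real.sqrt d : ℂ))⁻¹ • T g := by
    intro g
    rw [hρS, mul_add, mul_smul_comm, mul_smul_comm, hTS g, smul_zero, zero_add,
      Finset.mul_sum]
    congr 1
    rw [Finset.sum_eq_single g]
    · rw [← mul_assoc, hTisom g, one_mul]
    · intro x _ hx
      rw [← mul_assoc, hTorth g x (Ne.symm hx), zero_mul]
    · intro h; exact absurd (Finset.mem_univ g) h
  -- Step 2 : star (ρ S) * T b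
  have h2 : star (ρ S) * T b = ((Real.sqrt d : ℂ))⁻¹ • star (T b) := by
    have h := congrArg star (h1 b)
    rw [star_mul, star_star] at h
    rw [h, star_smul]
    congr 1
    simp [Complex.star_def, map_inv₀, Complex.conj_ofReal]
  -- piece X
  have hX : star (T b) * (star (T c) * (T (-e) * S * star S)) = 0 := by
    rw [mul_assoc (T (-e))]
    by_cases hce : c = -e
    · rw [hce, keyE (-e), ← mul_assoc, hTS b, zero_mul]
    · rw [keyN c (-e) _ hce, mul_zero]
  -- piece Y
  have hY : star (T c) * (((Real.sqrt d : ℂ))⁻¹ • (S * star (T (-e)))) = 0 := by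
    rw [mul_smul_comm, ← mul_assoc, hTS c, zero_mul, smul_zero]
  -- piece Z
  have hZ : star (T b) * (star (T c) *
      (∑ h : G, ∑ k : G,
        Acoef (-e) h k • (T (h - e) * T (h + k - e) * star (T (k - e)))))
      = Acoef (-e) (c + e) (b - c) • star (T (b - c - e)) := by
    rw [Finset.mul_sum, Finset.mul_sum]
    rw [Finset.sum_eq_single (c + e)]
    · rw [Finset.mul_sum, Finset.mul_sum, Finset.sum_eq_single (b - c)]
      · rw [show c + e - e = c from by abel, show c + e + (b - c) - e = b from by abel]
        rw [mul_smul_comm, mul_smul_comm]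
        congr 1
        rw [mul_assoc (T c), keyE c, keyE b]
      · intro k _ hk
        rw [show c + e - e = c from by abel, show c + e + k - e = c + k from by abel]
        rw [mul_smul_comm, mul_smul_comm, mul_assoc (T c), keyE c,
          keyN b (c + k) _ (fun hb => hk (by rw [hb]; abel)), smul_zero]
      · intro h; exact absurd (Finset.mem_univ (b - c)) h
    · intro h _ hh
      rw [Finset.mul_sum, Finset.mul_sum]
      apply Finset.sum_eq_zero
      intro k _
      rw [mul_smul_comm, mul_smul_comm, mul_assoc (T (h - e)),
        keyN c (h - e) _ (fun hc => hh (by rw [hc]; abel)), mul_zero, smul_zero]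
    · intro h; exact absurd (Finset.mem_univ (c + e)) h
  -- Step 3
  have h3 : star (T b) * (star (T c) * ρ (T e)) =
      ((ε e (-e) : ℂ) * Acoef (-e) (c + e) (b - c)) • star (T (b - c - e)) := by
    rw [hρT e, mul_smul_comm, mul_smul_comm, mul_add, mul_add, mul_add, mul_add,
      hX, hY, mul_zero, add_zero, zero_add, hZ, smul_smul]
  -- assemble
  calc star (T a) * ρ (S * star S) * T b * star (T c) * ρ (T e)
      = (star (T a) * ρ S) * ((star (ρ S) * T b) * (star (T c) * ρ (T e))) := by
        rw [map_mul, map_star]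
        simp only [mul_assoc]
    _ = ((ε e (-e) : ℂ) / (d : ℂ) * Acoef (-e) (c + e) (b - c)) •
          (T a * star (T (b - c - e))) := by
        rw [h1 a, h2]
        simp only [smul_mul_assoc]
        rw [h3]
        simp only [smul_smul, mul_smul_comm, smul_mul_assoc]
        congr 1
        rw [← mul_assoc, hsd]
        ring
end

section
/- For all a, b, c ∈ G one has (T a)* · ρ(T b) · (T c) = ε_b(−b) · A_{−b}(a+b, b+c) · T(a+b+c) in A. -/
theorem cuntz_TstarRhoT_T
    {G : Type*} [AddCommGroup G] [Fintype G] [DecidableEq G]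
    {A : Type*} [Ring A] [Algebra ℂ A] [StarRing A] [StarModule ℂ A]
    (d : ℝ) (hd : 0 < d)
    (S : A) (T : G → A) (ρ : A →⋆ₐ[ℂ] A)
    (ε : G → G → ℝ) (Acoef : G → G → G → ℂ)
    (hε : ∀ g h : G, ε g h = 1 ∨ ε g h = -1)
    (hAc : ∀ g h k : G, (starRingEnd ℂ) (Acoef g h k) = Acoef g k h)
    (hSS : star S * S = 1)
    (hTisom : ∀ g : G, star (T g) * T g = 1)
    (hST : ∀ g : G, star S * T g = 0)
    (hTorth : ∀ g h : G, g ≠ h → star (T g) * T h = 0)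
    (hρS : ρ S = ((d : ℂ))⁻¹ • S + ((Real.sqrt d : ℂ))⁻¹ • ∑ g : G, T g * T g)
    (hρT : ∀ g : G, ρ (T g) = ((ε g (-g) : ℂ)) •
        (T (-g) * S * star S
          + ((Real.sqrt d : ℂ))⁻¹ • (S * star (T (-g)))
          + ∑ h : G, ∑ k : G,
              Acoef (-g) h k • (T (h - g) * T (h + k - g) * star (T (k - g)))))
    (a b c : G) :
    star (T a) * ρ (T b) * T c
      = ((ε b (-b) : ℂ) * Acoef (-b) (a + b) (b + c)) • T (a + b + c) := by
  have hTT : ∀ g h : G, star (T g) * T h = if g = h then 1 else 0 := by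
    intro g h
    by_cases hgh : g = h
    · simp [hgh, hTisom]
    · simp [hgh, hTorth g h hgh]
  have hTS : ∀ g : G, star (T g) * S = 0 := by
    intro g
    have := congrArg star (hST g)
    simpa [star_mul] using this
  have h1 : star (T a) * (T (-b) * S * star S) * T c = 0 := by
    calc star (T a) * (T (-b) * S * star S) * T c
        = star (T a) * T (-b) * S * (star S * T c) := by simp [mul_assoc]
      _ = 0 := by rw [hST]; simp
  have h2 : star (T a) * (S * star (T (-b))) * T c = 0 := by
    calc star (T a) * (S * star (T (-b))) * T c
        = (star (T a) * S) * (star (T (-b)) * T c) := by simp [mul_assoc]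
      _ = 0 := by rw [hTS]; simp
  have key : ∀ h k : G, star (T a) *
      (Acoef (-b) h k • (T (h - b) * T (h + k - b) * star (T (k - b)))) * T c
      = Acoef (-b) h k • ((star (T a) * T (h - b)) * T (h + k - b)
          * (star (T (k - b)) * T c)) := by
    intro h k
    rw [mul_smul_comm, smul_mul_assoc]
    congr 1
    simp [mul_assoc]
  have h3 : star (T a) * (∑ h : G, ∑ k : G,
      Acoef (-b) h k • (T (h - b) * T (h + k - b) * star (T (k - b)))) * T c
      = Acoef (-b) (a + b) (b + c) • T (a + b + c) := by
    rw [Finset.mul_sum, Finset.sum_mul]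
    rw [Finset.sum_eq_single (a + b)]
    · rw [Finset.mul_sum, Finset.sum_mul]
      rw [Finset.sum_eq_single (b + c)]
      · rw [key]
        have e1 : a + b - b = a := by abel
        have e2 : b + c - b = c := by abel
        have e3 : a + b + (b + c) - b = a + b + c := by abel
        rw [e1, e2, e3, hTisom, hTisom, one_mul, mul_one]
      · intro k _ hk
        rw [key]
        have : k - b ≠ c := fun h => hk (by rw [← h]; abel)
        rw [hTT (k - b) c, if_neg this]
        simp
      · simp
    · intro h _ hh
      rw [Finset.mul_sum, Finset.sum_mul]
      apply Finset.sum_eq_zero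
      intro k _
      rw [key]
      have : a ≠ h - b := fun hc => hh (by rw [hc]; abel)
      rw [hTT a (h - b), if_neg this]
      simp
    · simp
  rw [hρT b, mul_smul_comm, smul_mul_assoc, mul_add, mul_add, add_mul, add_mul,
    mul_smul_comm, smul_mul_assoc, h1, h2, h3, smul_zero]
  simp [mul_smul]
end

section
/- For all a, b, c, e ∈ G one has (T a)* · ρ(T b) · (T c)* · ρ(T e) = ε_b(−b) · ε_e(−e) · ( δ_{a,−b} · δ_{c,−e} · S·S* + ∑_{j∈G} A_{−b}(a+b, b+c+j) · A_{−e}(c+e, j) · T(a+b+c+j) · (T(j−e))* ) in A. -/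
lemma cuntz_key
    {G : Type*} [AddCommGroup G] [Fintype G] [DecidableEq G]
    {A : Type*} [Ring A] [Algebra ℂ A] [StarRing A] [StarModule ℂ A]
    (d : ℝ)
    (S : A) (T : G → A) (ρ : A →⋆ₐ[ℂ] A)
    (ε : G → G → ℝ) (Acoef : G → G → G → ℂ)
    (hTisom : ∀ g : G, star (T g) * T g = 1)
    (hST : ∀ g : G, star S * T g = 0)
    (hTorth : ∀ g h : G, g ≠ h → star (T g) * T h = 0)
    (hρT : ∀ g : G, ρ (T g) = ((ε g (-g) : ℂ)) •
        (T (-g) * S * star S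
          + ((Real.sqrt d : ℂ))⁻¹ • (S * star (T (-g)))
          + ∑ h : G, ∑ k : G,
              Acoef (-g) h k • (T (h - g) * T (h + k - g) * star (T (k - g)))))
    (x y : G) :
    star (T x) * ρ (T y) = (ε y (-y) : ℂ) •
      ((if x = -y then S * star S else 0)
        + ∑ k : G, Acoef (-y) (x + y) k • (T (x + k) * star (T (k - y)))) := by
  have hTS : ∀ g : G, star (T g) * S = 0 := fun g => by
    have := congrArg star (hST g); simpa using this
  have hTT : ∀ g h : G, star (T g) * T h = if g = h then 1 else 0 := fun g h => by
    by_cases h' : g = h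
    · simp [h', hTisom]
    · simp [h', hTorth g h h']
  rw [hρT y, mul_smul_comm]
  congr 1
  rw [mul_add, mul_add]
  have h1 : star (T x) * (T (-y) * S * star S) = (if x = -y then S * star S else 0) := by
    rw [mul_assoc (T (-y)), ← mul_assoc, hTT]
    by_cases h' : x = -y <;> simp [h']
  have h2 : star (T x) * (((Real.sqrt d : ℂ))⁻¹ • (S * star (T (-y)))) = 0 := by
    rw [mul_smul_comm, ← mul_assoc, hTS]; simp
  rw [h1, h2, add_zero]
  congr 1
  simp only [Finset.mul_sum]
  rw [Finset.sum_comm]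
  refine Finset.sum_congr rfl fun k _ => ?_
  rw [Finset.sum_eq_single (x + y)]
  · rw [mul_smul_comm]
    congr 1
    rw [mul_assoc (T (x + y - y)), ← mul_assoc, hTT, if_pos (by abel)]
    rw [one_mul]
    congr 2
    abel
  · intro h _ hh
    rw [mul_smul_comm, mul_assoc (T (h - y)), ← mul_assoc, hTT,
      if_neg (fun hc => hh (by rw [hc]; abel)), zero_mul, smul_zero]
  · intro h; exact absurd (Finset.mem_univ _) h

theorem cuntz_TstarRhoT_TstarRhoT
    {G : Type*} [AddCommGroup G] [Fintype G] [DecidableEq G]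
    {A : Type*} [Ring A] [Algebra ℂ A] [StarRing A] [StarModule ℂ A]
    (d : ℝ) (hd : 0 < d)
    (S : A) (T : G → A) (ρ : A →⋆ₐ[ℂ] A)
    (ε : G → G → ℝ) (Acoef : G → G → G → ℂ)
    (hε : ∀ g h : G, ε g h = 1 ∨ ε g h = -1)
    (hAc : ∀ g h k : G, (starRingEnd ℂ) (Acoef g h k) = Acoef g k h)
    (hSS : star S * S = 1)
    (hTisom : ∀ g : G, star (T g) * T g = 1)
    (hST : ∀ g : G, star S * T g = 0)
    (hTorth : ∀ g h : G, g ≠ h → star (T g) * T h = 0)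
    (hρS : ρ S = ((d : ℂ))⁻¹ • S + ((Real.sqrt d : ℂ))⁻¹ • ∑ g : G, T g * T g)
    (hρT : ∀ g : G, ρ (T g) = ((ε g (-g) : ℂ)) •
        (T (-g) * S * star S
          + ((Real.sqrt d : ℂ))⁻¹ • (S * star (T (-g)))
          + ∑ h : G, ∑ k : G,
              Acoef (-g) h k • (T (h - g) * T (h + k - g) * star (T (k - g)))))
    (a b c e : G) :
    star (T a) * ρ (T b) * star (T c) * ρ (T e)
      = ((ε b (-b) : ℂ) * (ε e (-e) : ℂ)) •
          ((if a = -b ∧ c = -e then S * star S else 0)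
            + ∑ j : G, (Acoef (-b) (a + b) (b + c + j) * Acoef (-e) (c + e) j) •
                (T (a + b + c + j) * star (T (j - e)))) := by
  have hTS : ∀ g : G, star (T g) * S = 0 := fun g => by
    have := congrArg star (hST g); simpa using this
  have hTT : ∀ g h : G, star (T g) * T h = if g = h then 1 else 0 := fun g h => by
    by_cases h' : g = h
    · simp [h', hTisom]
    · simp [h', hTorth g h h']
  have e1 := cuntz_key d S T ρ ε Acoef hTisom hST hTorth hρT a b
  have e2 := cuntz_key d S T ρ ε Acoef hTisom hST hTorth hρT c e
  rw [mul_assoc, e1, e2, smul_mul_assoc, mul_smul_comm, smul_smul]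
  congr 1
  set X1 : A := if a = -b then S * star S else 0 with hX1
  set Y1 : A := if c = -e then S * star S else 0 with hY1
  rw [add_mul, mul_add, mul_add]
  have t11 : X1 * Y1 = (if a = -b ∧ c = -e then S * star S else 0) := by
    by_cases h1 : a = -b <;> by_cases h2 : c = -e
    · rw [hX1, hY1, if_pos h1, if_pos h2, if_pos ⟨h1, h2⟩, mul_assoc,
        ← mul_assoc (star S), hSS, one_mul]
    all_goals simp [hX1, hY1, h1, h2]
  have t12 : X1 * (∑ j : G, Acoef (-e) (c + e) j • (T (c + j) * star (T (j - e)))) = 0 := by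
    by_cases h1 : a = -b
    · rw [hX1, if_pos h1, Finset.mul_sum]
      refine Finset.sum_eq_zero fun j _ => ?_
      rw [mul_smul_comm, mul_assoc, ← mul_assoc (star S), hST]
      simp
    · simp [hX1, h1]
  have t21 : (∑ k : G, Acoef (-b) (a + b) k • (T (a + k) * star (T (k - b)))) * Y1 = 0 := by
    by_cases h2 : c = -e
    · rw [hY1, if_pos h2, Finset.sum_mul]
      refine Finset.sum_eq_zero fun k _ => ?_
      rw [smul_mul_assoc, mul_assoc, ← mul_assoc (star (T (k - b))), hTS]
      simp
    · simp [hY1, h2]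
  rw [t11, t12, t21, add_zero, zero_add]
  congr 1
  simp only [Finset.sum_mul, Finset.mul_sum]
  refine Finset.sum_congr rfl fun j _ => ?_
  rw [Finset.sum_eq_single (b + c + j)]
  · rw [smul_mul_assoc, mul_smul_comm, smul_smul]
    congr 1
    rw [show b + c + j - b = c + j from by abel,
      mul_assoc (T (a + (b + c + j))), ← mul_assoc (star (T (c + j))), hTT, if_pos rfl,
      one_mul, show a + (b + c + j) = a + b + c + j from by abel]
  · intro i _ hh
    rw [smul_mul_assoc, mul_smul_comm, smul_smul,
      mul_assoc (T (a + i)), ← mul_assoc (star (T (i - b))), hTT,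
      if_neg (fun hc => hh (by rw [sub_eq_iff_eq_add] at hc; rw [hc]; abel)),
      zero_mul, mul_zero, smul_zero]
  · intro h; exact absurd (Finset.mem_univ _) h
end

section
/- For all a, b, c, e, f, g ∈ G one has (T a)* · ρ(T b · (T c)*) · (T e) · (T f)* · ρ(T g) = ε_b(−b) · ε_c(−c) · ε_g(−g) · ( δ_{a,−b} · δ_{c,−e} · δ_{f,−g} · S·S* + ∑_{j∈G} A_{−b}(a+b, b−c+j) · A_{−g}(f+g, e−f+j) · A_{−c}(j, c+e) · T(j+b−c+a) · (T(j+e−f−g))* ) in A. -/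
noncomputable def Eform {G : Type*} [Fintype G] {A : Type*} [Ring A] [Algebra ℂ A] [StarRing A]
    (S : A) (T : G → A) (e : ℂ) (P : Prop) [Decidable P] (c : G → ℂ) (p q : G → G) : A :=
  e • ((if P then S * star S else 0) + ∑ k : G, c k • (T (p k) * star (T (q k))))

lemma TT_cont {G : Type*} [DecidableEq G] {A : Type*} [Ring A] [StarRing A] (T : G → A)
    (hTisom : ∀ g : G, star (T g) * T g = 1)
    (hTorth : ∀ g h : G, g ≠ h → star (T g) * T h = 0)
    (x y : G) (m : A) : star (T x) * (T y * m) = if x = y then m else 0 := by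
  rw [← mul_assoc]
  by_cases h : x = y
  · subst h; rw [hTisom, one_mul, if_pos rfl]
  · rw [hTorth _ _ h, zero_mul, if_neg h]

lemma TS_cont {G : Type*} {A : Type*} [Ring A] [StarRing A] (S : A) (T : G → A)
    (hST : ∀ g : G, star S * T g = 0)
    (x : G) (m : A) : star (T x) * (S * m) = 0 := by
  have h : star (T x) * S = 0 := by
    have := congrArg star (hST x); simpa using this
  rw [← mul_assoc, h, zero_mul]

lemma L1 {G : Type*} [AddCommGroup G] [Fintype G] [DecidableEq G]
    {A : Type*} [Ring A] [Algebra ℂ A] [StarRing A] [StarModule ℂ A]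
    (S : A) (T : G → A) (ρ : A →⋆ₐ[ℂ] A) (d : ℝ)
    (ε : G → G → ℝ) (Acoef : G → G → G → ℂ)
    (hTisom : ∀ g : G, star (T g) * T g = 1)
    (hST : ∀ g : G, star S * T g = 0)
    (hTorth : ∀ g h : G, g ≠ h → star (T g) * T h = 0)
    (hρT : ∀ g : G, ρ (T g) = ((ε g (-g) : ℂ)) •
        (T (-g) * S * star S
          + ((Real.sqrt d : ℂ))⁻¹ • (S * star (T (-g)))
          + ∑ h : G, ∑ k : G,
              Acoef (-g) h k • (T (h - g) * T (h + k - g) * star (T (k - g)))))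
    (a b : G) :
    star (T a) * ρ (T b) =
      Eform S T (ε b (-b) : ℂ) (a = -b) (fun k => Acoef (-b) (a + b) k)
        (fun k => a + k) (fun k => k - b) := by
  rw [hρT, Eform]
  rw [mul_smul_comm]
  congr 1
  rw [mul_add, mul_add]
  simp only [Finset.mul_sum, mul_smul_comm, mul_assoc,
    TT_cont T hTisom hTorth, TS_cont S T hST, smul_zero, smul_ite,
    Finset.sum_ite_irrel, Finset.sum_const_zero]
  congr 1
  · rw [add_zero]
  simp only [show ∀ h : G, (a = h - b) = (a + b = h) from fun h => by
      rw [eq_sub_iff_add_eq], Finset.sum_ite_eq, if_pos (Finset.mem_univ _)]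
  exact Finset.sum_congr rfl fun k _ => by rw [show a + b + k - b = a + k from by abel]

lemma starE {G : Type*} [Fintype G] {A : Type*} [Ring A] [Algebra ℂ A] [StarRing A] [StarModule ℂ A]
    (S : A) (T : G → A) (e : ℂ) (P : Prop) [Decidable P] (c : G → ℂ) (p q : G → G) :
    star (Eform S T e P c p q) =
      Eform S T (star e) P (fun k => star (c k)) q p := by
  simp only [Eform, star_smul, star_add, star_sum, star_mul, star_star,
    apply_ite (star : A → A), star_zero, mul_assoc]

lemma SSproj {A : Type*} [Ring A] [StarRing A] (S : A) (hSS : star S * S = 1) :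
    (S * star S) * (S * star S) = S * star S := by
  rw [mul_assoc, ← mul_assoc (star S), hSS, one_mul]

lemma proj_TT {G : Type*} {A : Type*} [Ring A] [StarRing A] (S : A) (T : G → A)
    (hST : ∀ g : G, star S * T g = 0) (x y : G) :
    (S * star S) * (T x * star (T y)) = 0 := by
  rw [mul_assoc, ← mul_assoc (star S), hST, zero_mul, mul_zero]

lemma TT_proj {G : Type*} {A : Type*} [Ring A] [StarRing A] (S : A) (T : G → A)
    (hST : ∀ g : G, star S * T g = 0) (x y : G) :
    (T x * star (T y)) * (S * star S) = 0 := by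
  have h : star (T y) * S = 0 := by
    have := congrArg star (hST y); simpa using this
  rw [mul_assoc, ← mul_assoc (star (T y)), h, zero_mul, mul_zero]

lemma TTTT {G : Type*} [DecidableEq G] {A : Type*} [Ring A] [StarRing A] (T : G → A)
    (hTisom : ∀ g : G, star (T g) * T g = 1)
    (hTorth : ∀ g h : G, g ≠ h → star (T g) * T h = 0)
    (x y u v : G) :
    (T x * star (T y)) * (T u * star (T v)) =
      if y = u then T x * star (T v) else 0 := by
  rw [mul_assoc, TT_cont T hTisom hTorth y u (star (T v))]
  by_cases h : y = u <;> simp [h]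

lemma mulE {G : Type*} [AddCommGroup G] [Fintype G] [DecidableEq G]
    {A : Type*} [Ring A] [Algebra ℂ A] [StarRing A] [StarModule ℂ A]
    (S : A) (T : G → A)
    (hSS : star S * S = 1)
    (hTisom : ∀ g : G, star (T g) * T g = 1)
    (hST : ∀ g : G, star S * T g = 0)
    (hTorth : ∀ g h : G, g ≠ h → star (T g) * T h = 0)
    (e₁ e₂ : ℂ) (P₁ P₂ : Prop) [Decidable P₁] [Decidable P₂]
    (c₁ c₂ : G → ℂ) (p₁ q₁ p₂ q₂ : G → G) :
    Eform S T e₁ P₁ c₁ p₁ q₁ * Eform S T e₂ P₂ c₂ p₂ q₂ =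
      (e₁ * e₂) • ((if P₁ ∧ P₂ then S * star S else 0) +
        ∑ k : G, ∑ l : G, if q₁ k = p₂ l then
          (c₁ k * c₂ l) • (T (p₁ k) * star (T (q₂ l))) else 0) := by
  rw [Eform, Eform, smul_mul_smul_comm]
  congr 1
  simp only [add_mul, mul_add, Finset.sum_mul, Finset.mul_sum,
    smul_mul_smul_comm, mul_smul_comm, smul_mul_assoc,
    SSproj S hSS, proj_TT S T hST, TT_proj S T hST, TTTT T hTisom hTorth,
    ite_mul, mul_ite, zero_mul, mul_zero, smul_zero, smul_ite,
    Finset.sum_const_zero, add_zero, zero_add, ite_self, ite_and]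
  congr 1
  · by_cases h1 : P₁ <;> by_cases h2 : P₂ <;> simp [h1, h2]
  · simp only [Finset.smul_sum, smul_ite, smul_zero, smul_smul]
    rw [Finset.sum_comm]
    exact Finset.sum_congr rfl fun k _ => Finset.sum_congr rfl fun l _ => by
      rw [mul_comm (c₂ l) (c₁ k)]

lemma collapseE {G : Type*} [AddCommGroup G] [Fintype G] [DecidableEq G]
    {A : Type*} [Ring A] [Algebra ℂ A] [StarRing A] [StarModule ℂ A]
    (S : A) (T : G → A)
    (hSS : star S * S = 1)
    (hTisom : ∀ g : G, star (T g) * T g = 1)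
    (hST : ∀ g : G, star S * T g = 0)
    (hTorth : ∀ g h : G, g ≠ h → star (T g) * T h = 0)
    (e₁ e₂ : ℂ) (P₁ P₂ : Prop) [Decidable P₁] [Decidable P₂]
    (c₁ c₂ : G → ℂ) (p₁ q₁ p₂ q₂ : G → G) (σ : G → G)
    (hσ : ∀ k l : G, (q₁ k = p₂ l) ↔ (σ k = l)) :
    Eform S T e₁ P₁ c₁ p₁ q₁ * Eform S T e₂ P₂ c₂ p₂ q₂ =
      Eform S T (e₁ * e₂) (P₁ ∧ P₂) (fun k => c₁ k * c₂ (σ k)) p₁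
        (fun k => q₂ (σ k)) := by
  rw [mulE S T hSS hTisom hST hTorth, Eform]
  congr 1
  congr 1
  refine Finset.sum_congr rfl fun k _ => ?_
  rw [Finset.sum_congr rfl (fun l _ => if_congr (hσ k l) rfl rfl), Finset.sum_ite_eq,
    if_pos (Finset.mem_univ _)]

theorem cuntz_TstarRhoTTstar_TTstar_rhoT
    {G : Type*} [AddCommGroup G] [Fintype G] [DecidableEq G]
    {A : Type*} [Ring A] [Algebra ℂ A] [StarRing A] [StarModule ℂ A]
    (d : ℝ) (hd : 0 < d)
    (S : A) (T : G → A) (ρ : A →⋆ₐ[ℂ] A)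
    (ε : G → G → ℝ) (Acoef : G → G → G → ℂ)
    (hε : ∀ g h : G, ε g h = 1 ∨ ε g h = -1)
    (hAc : ∀ g h k : G, (starRingEnd ℂ) (Acoef g h k) = Acoef g k h)
    (hSS : star S * S = 1)
    (hTisom : ∀ g : G, star (T g) * T g = 1)
    (hST : ∀ g : G, star S * T g = 0)
    (hTorth : ∀ g h : G, g ≠ h → star (T g) * T h = 0)
    (hρS : ρ S = ((d : ℂ))⁻¹ • S + ((Real.sqrt d : ℂ))⁻¹ • ∑ g : G, T g * T g)
    (hρT : ∀ g : G, ρ (T g) = ((ε g (-g) : ℂ)) •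
        (T (-g) * S * star S
          + ((Real.sqrt d : ℂ))⁻¹ • (S * star (T (-g)))
          + ∑ h : G, ∑ k : G,
              Acoef (-g) h k • (T (h - g) * T (h + k - g) * star (T (k - g)))))
    (a b c e f g : G) :
    star (T a) * ρ (T b * star (T c)) * T e * star (T f) * ρ (T g)
      = ((ε b (-b) : ℂ) * (ε c (-c) : ℂ) * (ε g (-g) : ℂ)) •
          ((if a = -b ∧ c = -e ∧ f = -g then S * star S else 0)
            + ∑ j : G,
                (Acoef (-b) (a + b) (b - c + j) * Acoef (-g) (f + g) (e - f + j)
                    * Acoef (-c) j (c + e)) •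
                  (T (j + b - c + a) * star (T (j + e - f - g)))) := by
  have e1 := L1 S T ρ d ε Acoef hTisom hST hTorth hρT a b
  have e3 := L1 S T ρ d ε Acoef hTisom hST hTorth hρT f g
  have e2 : star (ρ (T c)) * T e =
      Eform S T (ε c (-c) : ℂ) (e = -c) (fun k => Acoef (-c) k (e + c))
        (fun k => k - c) (fun k => e + k) := by
    have h := congrArg star (L1 S T ρ d ε Acoef hTisom hST hTorth hρT e c)
    rw [star_mul, star_star, starE] at h
    rw [h, show (star ((ε c (-c) : ℝ) : ℂ)) = ((ε c (-c) : ℝ) : ℂ) from by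
        simp [Complex.star_def, Complex.conj_ofReal],
      show (fun k => star (Acoef (-c) (e + c) k)) = fun k => Acoef (-c) k (e + c) from
        funext fun k => by rw [← starRingEnd_apply, hAc]]
  have hL : star (T a) * ρ (T b * star (T c)) * T e * star (T f) * ρ (T g)
      = ((star (T a) * ρ (T b)) * (star (ρ (T c)) * T e)) * (star (T f) * ρ (T g)) := by
    rw [map_mul, map_star]
    simp only [mul_assoc]
  rw [hL, e1, e2, e3,
    collapseE S T hSS hTisom hST hTorth _ _ _ _ _ _ _ _ _ _ (fun k => k - b + c)
      (fun k l => eq_sub_iff_add_eq),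
    collapseE S T hSS hTisom hST hTorth _ _ _ _ _ _ _ _ _ _ (fun k => e + (k - b + c) - f)
      (fun k l => sub_eq_iff_eq_add'.symm),
    Eform]
  congr 1
  have hiff : ((a = -b ∧ e = -c) ∧ f = -g) ↔ (a = -b ∧ c = -e ∧ f = -g) := by
    have h1 : (e = -c) ↔ (c = -e) := ⟨fun h => by rw [h, neg_neg], fun h => by rw [h, neg_neg]⟩
    rw [h1, and_assoc]
  rw [if_congr hiff rfl rfl]
  congr 1
  refine Fintype.sum_equiv (Equiv.subRight (b - c))
    (fun k => ((Acoef (-b) (a + b) k * Acoef (-c) (k - b + c) (e + c))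
        * Acoef (-g) (f + g) (e + (k - b + c) - f)) •
      (T (a + k) * star (T (e + (k - b + c) - f - g)))) _ (fun k => ?_)
  simp only [Equiv.subRight_apply]
  rw [show b - c + (k - (b - c)) = k from by abel,
    show e - f + (k - (b - c)) = e + (k - b + c) - f from by abel,
    show k - (b - c) + b - c + a = a + k from by abel,
    show k - (b - c) + e - f - g = e + (k - b + c) - f - g from by abel,
    show k - (b - c) = k - b + c from by abel,
    show c + e = e + c from add_comm c e, mul_right_comm]
end

section
/- For the 10×10 matrix S_a, every entry of row 1 of S_a is nonzero, and for all indices i, j, k ∈ {1,…,10} the Verlinde number ∑_{r=1}^{10} S_a(i,r)·S_a(j,r)·S_a(k,r) / S_a(1,r) is a nonnegative integer. -/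
open Matrix

noncomputable section

/-- The 10×10 real matrix `S_a`: one tensor factor of the S-matrix of the quantum double
of the generalized Haagerup category for `ℤ/2ℤ × ℤ/2ℤ` (the S-matrix of a rank 10
modular tensor subcategory). -/
def Sa : Matrix (Fin 10) (Fin 10) ℝ := (20 : ℝ)⁻¹ •
  !![5 - 2 * Real.sqrt 5, 5 + 2 * Real.sqrt 5, 5, 5, 5, 5, 5, 5,
       4 * Real.sqrt 5, 4 * Real.sqrt 5;
     5 + 2 * Real.sqrt 5, 5 - 2 * Real.sqrt 5, 5, 5, 5, 5, 5, 5,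
       -(4 * Real.sqrt 5), -(4 * Real.sqrt 5);
     5, 5, 15, -5, -5, -5, -5, -5, 0, 0;
     5, 5, -5, 15, -5, -5, -5, -5, 0, 0;
     5, 5, -5, -5, 15, -5, -5, -5, 0, 0;
     5, 5, -5, -5, -5, 15, -5, -5, 0, 0;
     5, 5, -5, -5, -5, -5, 15, -5, 0, 0;
     5, 5, -5, -5, -5, -5, -5, 15, 0, 0;
     4 * Real.sqrt 5, -(4 * Real.sqrt 5), 0, 0, 0, 0, 0, 0,
       10 + 2 * Real.sqrt 5, -10 + 2 * Real.sqrt 5;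
     4 * Real.sqrt 5, -(4 * Real.sqrt 5), 0, 0, 0, 0, 0, 0,
       -10 + 2 * Real.sqrt 5, 10 + 2 * Real.sqrt 5]

namespace SaAux

def A : Fin 10 → Fin 10 → ℤ√5 := ![
  ![⟨5,-2⟩, ⟨5,2⟩, ⟨5,0⟩, ⟨5,0⟩, ⟨5,0⟩, ⟨5,0⟩, ⟨5,0⟩, ⟨5,0⟩, ⟨0,4⟩, ⟨0,4⟩],
  ![⟨5,2⟩, ⟨5,-2⟩, ⟨5,0⟩, ⟨5,0⟩, ⟨5,0⟩, ⟨5,0⟩, ⟨5,0⟩, ⟨5,0⟩, ⟨0,-4⟩, ⟨0,-4⟩],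
  ![⟨5,0⟩, ⟨5,0⟩, ⟨15,0⟩, ⟨-5,0⟩, ⟨-5,0⟩, ⟨-5,0⟩, ⟨-5,0⟩, ⟨-5,0⟩, ⟨0,0⟩, ⟨0,0⟩],
  ![⟨5,0⟩, ⟨5,0⟩, ⟨-5,0⟩, ⟨15,0⟩, ⟨-5,0⟩, ⟨-5,0⟩, ⟨-5,0⟩, ⟨-5,0⟩, ⟨0,0⟩, ⟨0,0⟩],
  ![⟨5,0⟩, ⟨5,0⟩, ⟨-5,0⟩, ⟨-5,0⟩, ⟨15,0⟩, ⟨-5,0⟩, ⟨-5,0⟩, ⟨-5,0⟩, ⟨0,0⟩, ⟨0,0⟩],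
  ![⟨5,0⟩, ⟨5,0⟩, ⟨-5,0⟩, ⟨-5,0⟩, ⟨-5,0⟩, ⟨15,0⟩, ⟨-5,0⟩, ⟨-5,0⟩, ⟨0,0⟩, ⟨0,0⟩],
  ![⟨5,0⟩, ⟨5,0⟩, ⟨-5,0⟩, ⟨-5,0⟩, ⟨-5,0⟩, ⟨-5,0⟩, ⟨15,0⟩, ⟨-5,0⟩, ⟨0,0⟩, ⟨0,0⟩],
  ![⟨5,0⟩, ⟨5,0⟩, ⟨-5,0⟩, ⟨-5,0⟩, ⟨-5,0⟩, ⟨-5,0⟩, ⟨-5,0⟩, ⟨15,0⟩, ⟨0,0⟩, ⟨0,0⟩],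
  ![⟨0,4⟩, ⟨0,-4⟩, ⟨0,0⟩, ⟨0,0⟩, ⟨0,0⟩, ⟨0,0⟩, ⟨0,0⟩, ⟨0,0⟩, ⟨10,2⟩, ⟨-10,2⟩],
  ![⟨0,4⟩, ⟨0,-4⟩, ⟨0,0⟩, ⟨0,0⟩, ⟨0,0⟩, ⟨0,0⟩, ⟨0,0⟩, ⟨0,0⟩, ⟨-10,2⟩, ⟨10,2⟩]]

def w : Fin 10 → ℤ√5 := ![⟨20,8⟩, ⟨20,-8⟩, ⟨4,0⟩, ⟨4,0⟩, ⟨4,0⟩, ⟨4,0⟩, ⟨4,0⟩, ⟨4,0⟩, ⟨0,1⟩, ⟨0,1⟩]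

def Ntab : Fin 10 → Fin 10 → Fin 10 → ℕ := ![
  ![![1, 0, 0, 0, 0, 0, 0, 0, 0, 0],
    ![0, 1, 0, 0, 0, 0, 0, 0, 0, 0],
    ![0, 0, 1, 0, 0, 0, 0, 0, 0, 0],
    ![0, 0, 0, 1, 0, 0, 0, 0, 0, 0],
    ![0, 0, 0, 0, 1, 0, 0, 0, 0, 0],
    ![0, 0, 0, 0, 0, 1, 0, 0, 0, 0],
    ![0, 0, 0, 0, 0, 0, 1, 0, 0, 0],
    ![0, 0, 0, 0, 0, 0, 0, 1, 0, 0],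
    ![0, 0, 0, 0, 0, 0, 0, 0, 1, 0],
    ![0, 0, 0, 0, 0, 0, 0, 0, 0, 1]],
  ![![0, 1, 0, 0, 0, 0, 0, 0, 0, 0],
    ![1, 4, 2, 2, 2, 2, 2, 2, 4, 4],
    ![0, 2, 2, 1, 1, 1, 1, 1, 2, 2],
    ![0, 2, 1, 2, 1, 1, 1, 1, 2, 2],
    ![0, 2, 1, 1, 2, 1, 1, 1, 2, 2],
    ![0, 2, 1, 1, 1, 2, 1, 1, 2, 2],
    ![0, 2, 1, 1, 1, 1, 2, 1, 2, 2],
    ![0, 2, 1, 1, 1, 1, 1, 2, 2, 2],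
    ![0, 4, 2, 2, 2, 2, 2, 2, 3, 4],
    ![0, 4, 2, 2, 2, 2, 2, 2, 4, 3]],
  ![![0, 0, 1, 0, 0, 0, 0, 0, 0, 0],
    ![0, 2, 2, 1, 1, 1, 1, 1, 2, 2],
    ![1, 2, 2, 0, 0, 0, 0, 0, 1, 1],
    ![0, 1, 0, 0, 1, 1, 1, 1, 1, 1],
    ![0, 1, 0, 1, 0, 1, 1, 1, 1, 1],
    ![0, 1, 0, 1, 1, 0, 1, 1, 1, 1],
    ![0, 1, 0, 1, 1, 1, 0, 1, 1, 1],
    ![0, 1, 0, 1, 1, 1, 1, 0, 1, 1],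
    ![0, 2, 1, 1, 1, 1, 1, 1, 2, 2],
    ![0, 2, 1, 1, 1, 1, 1, 1, 2, 2]],
  ![![0, 0, 0, 1, 0, 0, 0, 0, 0, 0],
    ![0, 2, 1, 2, 1, 1, 1, 1, 2, 2],
    ![0, 1, 0, 0, 1, 1, 1, 1, 1, 1],
    ![1, 2, 0, 2, 0, 0, 0, 0, 1, 1],
    ![0, 1, 1, 0, 0, 1, 1, 1, 1, 1],
    ![0, 1, 1, 0, 1, 0, 1, 1, 1, 1],
    ![0, 1, 1, 0, 1, 1, 0, 1, 1, 1],
    ![0, 1, 1, 0, 1, 1, 1, 0, 1, 1],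
    ![0, 2, 1, 1, 1, 1, 1, 1, 2, 2],
    ![0, 2, 1, 1, 1, 1, 1, 1, 2, 2]],
  ![![0, 0, 0, 0, 1, 0, 0, 0, 0, 0],
    ![0, 2, 1, 1, 2, 1, 1, 1, 2, 2],
    ![0, 1, 0, 1, 0, 1, 1, 1, 1, 1],
    ![0, 1, 1, 0, 0, 1, 1, 1, 1, 1],
    ![1, 2, 0, 0, 2, 0, 0, 0, 1, 1],
    ![0, 1, 1, 1, 0, 0, 1, 1, 1, 1],
    ![0, 1, 1, 1, 0, 1, 0, 1, 1, 1],
    ![0, 1, 1, 1, 0, 1, 1, 0, 1, 1],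
    ![0, 2, 1, 1, 1, 1, 1, 1, 2, 2],
    ![0, 2, 1, 1, 1, 1, 1, 1, 2, 2]],
  ![![0, 0, 0, 0, 0, 1, 0, 0, 0, 0],
    ![0, 2, 1, 1, 1, 2, 1, 1, 2, 2],
    ![0, 1, 0, 1, 1, 0, 1, 1, 1, 1],
    ![0, 1, 1, 0, 1, 0, 1, 1, 1, 1],
    ![0, 1, 1, 1, 0, 0, 1, 1, 1, 1],
    ![1, 2, 0, 0, 0, 2, 0, 0, 1, 1],
    ![0, 1, 1, 1, 1, 0, 0, 1, 1, 1],
    ![0, 1, 1, 1, 1, 0, 1, 0, 1, 1],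
    ![0, 2, 1, 1, 1, 1, 1, 1, 2, 2],
    ![0, 2, 1, 1, 1, 1, 1, 1, 2, 2]],
  ![![0, 0, 0, 0, 0, 0, 1, 0, 0, 0],
    ![0, 2, 1, 1, 1, 1, 2, 1, 2, 2],
    ![0, 1, 0, 1, 1, 1, 0, 1, 1, 1],
    ![0, 1, 1, 0, 1, 1, 0, 1, 1, 1],
    ![0, 1, 1, 1, 0, 1, 0, 1, 1, 1],
    ![0, 1, 1, 1, 1, 0, 0, 1, 1, 1],
    ![1, 2, 0, 0, 0, 0, 2, 0, 1, 1],
    ![0, 1, 1, 1, 1, 1, 0, 0, 1, 1],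
    ![0, 2, 1, 1, 1, 1, 1, 1, 2, 2],
    ![0, 2, 1, 1, 1, 1, 1, 1, 2, 2]],
  ![![0, 0, 0, 0, 0, 0, 0, 1, 0, 0],
    ![0, 2, 1, 1, 1, 1, 1, 2, 2, 2],
    ![0, 1, 0, 1, 1, 1, 1, 0, 1, 1],
    ![0, 1, 1, 0, 1, 1, 1, 0, 1, 1],
    ![0, 1, 1, 1, 0, 1, 1, 0, 1, 1],
    ![0, 1, 1, 1, 1, 0, 1, 0, 1, 1],
    ![0, 1, 1, 1, 1, 1, 0, 0, 1, 1],
    ![1, 2, 0, 0, 0, 0, 0, 2, 1, 1],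
    ![0, 2, 1, 1, 1, 1, 1, 1, 2, 2],
    ![0, 2, 1, 1, 1, 1, 1, 1, 2, 2]],
  ![![0, 0, 0, 0, 0, 0, 0, 0, 1, 0],
    ![0, 4, 2, 2, 2, 2, 2, 2, 3, 4],
    ![0, 2, 1, 1, 1, 1, 1, 1, 2, 2],
    ![0, 2, 1, 1, 1, 1, 1, 1, 2, 2],
    ![0, 2, 1, 1, 1, 1, 1, 1, 2, 2],
    ![0, 2, 1, 1, 1, 1, 1, 1, 2, 2],
    ![0, 2, 1, 1, 1, 1, 1, 1, 2, 2],
    ![0, 2, 1, 1, 1, 1, 1, 1, 2, 2],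
    ![1, 3, 2, 2, 2, 2, 2, 2, 4, 3],
    ![0, 4, 2, 2, 2, 2, 2, 2, 3, 3]],
  ![![0, 0, 0, 0, 0, 0, 0, 0, 0, 1],
    ![0, 4, 2, 2, 2, 2, 2, 2, 4, 3],
    ![0, 2, 1, 1, 1, 1, 1, 1, 2, 2],
    ![0, 2, 1, 1, 1, 1, 1, 1, 2, 2],
    ![0, 2, 1, 1, 1, 1, 1, 1, 2, 2],
    ![0, 2, 1, 1, 1, 1, 1, 1, 2, 2],
    ![0, 2, 1, 1, 1, 1, 1, 1, 2, 2],
    ![0, 2, 1, 1, 1, 1, 1, 1, 2, 2],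
    ![0, 4, 2, 2, 2, 2, 2, 2, 3, 3],
    ![1, 3, 2, 2, 2, 2, 2, 2, 3, 4]]]


set_option maxHeartbeats 4000000 in
theorem key : ∀ i j k : Fin 10,
    ∑ r : Fin 10, A i r * A j r * A k r * w r = (⟨(8000 : ℕ) * Ntab i j k, 0⟩ : ℤ√5) := by
  decide

theorem A0w : ∀ r : Fin 10, A 0 r * w r = (⟨20, 0⟩ : ℤ√5) := by decide

def φ : ℤ√5 →+* ℝ := Zsqrtd.lift ⟨Real.sqrt 5, by
  rw [Real.mul_self_sqrt (by norm_num : (0:ℝ) ≤ 5)]; norm_num⟩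

theorem φmk (a b : ℤ) : φ (⟨a, b⟩ : ℤ√5) = (a : ℝ) + (b : ℝ) * Real.sqrt 5 := by
  simp [φ, Zsqrtd.lift_apply_apply]

set_option maxHeartbeats 1600000 in
theorem hA : ∀ i r : Fin 10, Sa i r = φ (A i r) / 20 := by
  intro i r
  fin_cases i <;> fin_cases r <;>
    norm_num [Sa, A, φmk, Matrix.smul_apply] <;> ring

theorem hw : ∀ r : Fin 10, Sa 0 r * φ (w r) = 1 := by
  intro r
  have h := congrArg φ (A0w r)
  rw [_root_.map_mul] at h
  rw [hA 0 r, div_mul_eq_mul_div, h, φmk]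
  norm_num

end SaAux

open SaAux in
/-- Verlinde formula for `S_a`: every entry of the first row is nonzero, and all the
Verlinde numbers are nonnegative integers. -/
theorem Sa_verlinde :
    (∀ r : Fin 10, Sa 0 r ≠ 0) ∧
      ∀ i j k : Fin 10, ∃ n : ℕ,
        ∑ r : Fin 10, Sa i r * Sa j r * Sa k r / Sa 0 r = (n : ℝ) := by
  refine ⟨fun r => left_ne_zero_of_mul_eq_one (hw r), fun i j k => ⟨Ntab i j k, ?_⟩⟩
  have hinv : ∀ r : Fin 10, (Sa 0 r)⁻¹ = φ (w r) := fun r =>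
    inv_eq_of_mul_eq_one_right (hw r)
  calc ∑ r : Fin 10, Sa i r * Sa j r * Sa k r / Sa 0 r
      = ∑ r : Fin 10, φ (A i r * A j r * A k r * w r) / 8000 := by
        refine Finset.sum_congr rfl fun r _ => ?_
        rw [div_eq_mul_inv, hinv r, hA i r, hA j r, hA k r,
          _root_.map_mul, _root_.map_mul, _root_.map_mul]
        ring
    _ = φ (∑ r : Fin 10, A i r * A j r * A k r * w r) / 8000 := by
        rw [map_sum, Finset.sum_div]
    _ = φ (⟨(8000 : ℕ) * Ntab i j k, 0⟩ : ℤ√5) / 8000 := by rw [key i j k]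
    _ = (Ntab i j k : ℝ) := by
        rw [φmk]
        push_cast
        ring

end
end
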